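/- At each of the singular points (0:1:0) and (1:0:0) (the latter when it lies in Sing) the curve F = 0 has multiplicity exactly 2; concretely, the second-order partial derivative F_zz does not vanish at (0:1:0), and F_yy does not vanish at (1:0:0). -/

import Mathlib

/-! Over an infinite field a ternary form is determined by its degree and its dehomogenization
at `z = 1`, so `F = y⁴z² - 2(Φ₁ + Φ₂)y² + G²`, where `Φᵢ` is the quartic form homogenizing `φᵢ`
and `G` the cubic form homogenizing `φ₁ - φ₂`. Now `F_zz(0,1,0)` and `F_yy(1,0,0)` are twice the
coefficients of `y⁴z²` and `x⁴y²`, namely `2` and `-8`, nonzero since `char k ≠ 2`. -/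

open MvPolynomial

namespace MvPolynomial

lemma IsHomogeneous.eval_smul {R σ : Type*} [CommSemiring R] {P : MvPolynomial σ R} {n : ℕ}
    (hP : P.IsHomogeneous n) (c : R) (v : σ → R) :
    eval (c • v) P = c ^ n * eval v P := by
  rw [eval_eq, eval_eq, Finset.mul_sum]
  refine Finset.sum_congr rfl fun d hd => ?_
  have hdeg : d.degree = n := by
    by_contra hne
    exact mem_support_iff.mp hd (hP.coeff_eq_zero hne)
  simp_rw [Pi.smul_apply, smul_eq_mul, mul_pow]
  rw [Finset.prod_mul_distrib, Finset.prod_pow_eq_pow_sum, ← Finsupp.degree_apply, hdeg]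
  ring

lemma eval_aeval_dehomogenize {R : Type*} [CommSemiring R] (F : MvPolynomial (Fin 3) R)
    (a b : R) :
    eval ![a, b] (aeval ![(X 0 : MvPolynomial (Fin 2) R), X 1, 1] F) = eval ![a, b, 1] F := by
  rw [aeval_def, eval_eval₂]
  have hcoeff : (eval ![a, b]).comp (algebraMap R (MvPolynomial (Fin 2) R)) = RingHom.id R := by
    ext r; simp [algebraMap_eq]
  have hvars : (fun i => eval ![a, b] (![(X 0 : MvPolynomial (Fin 2) R), X 1, 1] i)) =
      ![a, b, 1] := by
    funext i; fin_cases i <;> simp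
  rw [hcoeff, hvars, eval₂_id]

/-- Multiplying by `z` turns agreement off the line `z = 0` into agreement everywhere. -/
lemma IsHomogeneous.eq_of_aeval_dehomogenize_eq {K : Type*} [Field K] [Infinite K]
    {F G : MvPolynomial (Fin 3) K} {n : ℕ} (hF : F.IsHomogeneous n) (hG : G.IsHomogeneous n)
    (h : MvPolynomial.aeval ![(X 0 : MvPolynomial (Fin 2) K), X 1, 1] F =
      MvPolynomial.aeval ![(X 0 : MvPolynomial (Fin 2) K), X 1, 1] G) :
    F = G := by
  refine mul_left_cancel₀ (X_ne_zero 2) ((isHomogeneous_X K 2).mul hF |>.funext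
    ((isHomogeneous_X K 2).mul hG) fun v => ?_)
  rcases eq_or_ne (v 2) 0 with hz | hz
  · simp [hz]
  have hv : v = v 2 • ![v 0 / v 2, v 1 / v 2, 1] := by
    funext i; fin_cases i <;> simp [mul_div_cancel₀ _ hz]
  have haffine : eval ![v 0 / v 2, v 1 / v 2, 1] F = eval ![v 0 / v 2, v 1 / v 2, 1] G := by
    rw [← eval_aeval_dehomogenize, ← eval_aeval_dehomogenize, h]
  rw [map_mul, map_mul, hv, hF.eval_smul, hG.eval_smul, haffine]

end MvPolynomial

section Sextic

variable {R : Type*} [CommRing R]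

noncomputable def quarticForm (a₁ a₂ a₃ a₄ : R) : MvPolynomial (Fin 3) R :=
  (X 0 - C a₁ * X 2) * (X 0 - C a₂ * X 2) * (X 0 - C a₃ * X 2) * (X 0 - C a₄ * X 2)

noncomputable def cubicForm (c₃ c₂ c₁ c₀ : R) : MvPolynomial (Fin 3) R :=
  C c₃ * X 0 ^ 3 + C c₂ * X 0 ^ 2 * X 2 + C c₁ * X 0 * X 2 ^ 2 + C c₀ * X 2 ^ 3

/-- The cubic `G` with `z * G = quarticForm a₁ a₂ a₃ a₄ - quarticForm b₁ b₂ b₃ b₄` (the `x⁴` terms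
cancel); its coefficients are `τ₁ - σ₁, σ₂ - τ₂, τ₃ - σ₃, σ₄ - τ₄`. -/
noncomputable def differenceCubicForm (a₁ a₂ a₃ a₄ b₁ b₂ b₃ b₄ : R) : MvPolynomial (Fin 3) R :=
  cubicForm (b₁ + b₂ + b₃ + b₄ - (a₁ + a₂ + a₃ + a₄))
    (a₁ * a₂ + a₁ * a₃ + a₁ * a₄ + a₂ * a₃ + a₂ * a₄ + a₃ * a₄
      - (b₁ * b₂ + b₁ * b₃ + b₁ * b₄ + b₂ * b₃ + b₂ * b₄ + b₃ * b₄))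
    (b₁ * b₂ * b₃ + b₁ * b₂ * b₄ + b₁ * b₃ * b₄ + b₂ * b₃ * b₄
      - (a₁ * a₂ * a₃ + a₁ * a₂ * a₄ + a₁ * a₃ * a₄ + a₂ * a₃ * a₄))
    (a₁ * a₂ * a₃ * a₄ - b₁ * b₂ * b₃ * b₄)

noncomputable def sexticForm (Φ Ψ G : MvPolynomial (Fin 3) R) : MvPolynomial (Fin 3) R :=
  X 1 ^ 4 * X 2 ^ 2 - C 2 * (Φ + Ψ) * X 1 ^ 2 + G ^ 2

lemma isHomogeneous_quarticForm (a₁ a₂ a₃ a₄ : R) :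
    (quarticForm a₁ a₂ a₃ a₄).IsHomogeneous 4 := by
  have hlin (a : R) : ((X 0 : MvPolynomial (Fin 3) R) - C a * X 2).IsHomogeneous 1 :=
    (isHomogeneous_X R 0).sub (by simpa using (isHomogeneous_C _ a).mul (isHomogeneous_X R 2))
  exact (((hlin a₁).mul (hlin a₂)).mul (hlin a₃)).mul (hlin a₄)

lemma isHomogeneous_cubicForm (c₃ c₂ c₁ c₀ : R) : (cubicForm c₃ c₂ c₁ c₀).IsHomogeneous 3 := by
  have hx := isHomogeneous_X R (0 : Fin 3)
  have hz := isHomogeneous_X R (2 : Fin 3)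
  have hC (c : R) := isHomogeneous_C (Fin 3) c
  exact ((((hC c₃).mul (hx.pow 3)).add (((hC c₂).mul (hx.pow 2)).mul hz)).add
    (((hC c₁).mul hx).mul (hz.pow 2))).add ((hC c₀).mul (hz.pow 3))

lemma isHomogeneous_sexticForm {Φ Ψ G : MvPolynomial (Fin 3) R} (hΦ : Φ.IsHomogeneous 4)
    (hΨ : Ψ.IsHomogeneous 4) (hG : G.IsHomogeneous 3) : (sexticForm Φ Ψ G).IsHomogeneous 6 := by
  have hy := isHomogeneous_X R (1 : Fin 3)
  have hz := isHomogeneous_X R (2 : Fin 3)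
  exact (((hy.pow 4).mul (hz.pow 2)).sub
    (((isHomogeneous_C _ 2).mul (hΦ.add hΨ)).mul (hy.pow 2))).add (hG.pow 2)


lemma eval_pderiv_two_two_sexticForm (a₁ a₂ a₃ a₄ b₁ b₂ b₃ b₄ c₃ c₂ c₁ c₀ : R) :
    eval ![0, 1, 0] (pderiv 2 (pderiv 2 (sexticForm (quarticForm a₁ a₂ a₃ a₄)
      (quarticForm b₁ b₂ b₃ b₄) (cubicForm c₃ c₂ c₁ c₀)))) = 2 := by
  simp [sexticForm, quarticForm, cubicForm]

lemma eval_pderiv_one_one_sexticForm (a₁ a₂ a₃ a₄ b₁ b₂ b₃ b₄ c₃ c₂ c₁ c₀ : R) :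
    eval ![1, 0, 0] (pderiv 1 (pderiv 1 (sexticForm (quarticForm a₁ a₂ a₃ a₄)
      (quarticForm b₁ b₂ b₃ b₄) (cubicForm c₃ c₂ c₁ c₀)))) = -8 := by
  simp [sexticForm, quarticForm, cubicForm]
  norm_num

lemma aeval_dehomogenize_sexticForm (a₁ a₂ a₃ a₄ b₁ b₂ b₃ b₄ : R) :
    aeval ![(X 0 : MvPolynomial (Fin 2) R), X 1, 1] (sexticForm (quarticForm a₁ a₂ a₃ a₄)
      (quarticForm b₁ b₂ b₃ b₄) (differenceCubicForm a₁ a₂ a₃ a₄ b₁ b₂ b₃ b₄)) =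
      X 1 ^ 4 - C 2 * ((X 0 - C a₁) * (X 0 - C a₂) * (X 0 - C a₃) * (X 0 - C a₄)
        + (X 0 - C b₁) * (X 0 - C b₂) * (X 0 - C b₃) * (X 0 - C b₄)) * X 1 ^ 2
      + ((X 0 - C a₁) * (X 0 - C a₂) * (X 0 - C a₃) * (X 0 - C a₄)
        - (X 0 - C b₁) * (X 0 - C b₂) * (X 0 - C b₃) * (X 0 - C b₄)) ^ 2 := by
  simp only [sexticForm, quarticForm, differenceCubicForm, cubicForm, map_add, map_sub, map_mul,
    map_pow, aeval_X, aeval_C, algebraMap_eq, Matrix.cons_val_zero, Matrix.cons_val_one,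
    Matrix.cons_val_two, Matrix.head_cons, Matrix.tail_cons]
  ring

end Sextic

theorem stmt_7_general
    {k : Type*} [Field k] [IsAlgClosed k]
    (p : ℕ) [CharP k p] (hp : p = 0 ∨ 5 ≤ p)
    (α1 α2 α3 α4 β1 β2 β3 β4 : k)
    (φ1 φ2 f : MvPolynomial (Fin 2) k)
    (hφ1 : φ1 = (X 0 - C α1) * (X 0 - C α2) * (X 0 - C α3) * (X 0 - C α4))
    (hφ2 : φ2 = (X 0 - C β1) * (X 0 - C β2) * (X 0 - C β3) * (X 0 - C β4))
    (hf : f = X 1 ^ 4 - C 2 * (φ1 + φ2) * X 1 ^ 2 + (φ1 - φ2) ^ 2)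
    (F : MvPolynomial (Fin 3) k)
    (hFhom : F.IsHomogeneous 6)
    (hFf : aeval ![(X 0 : MvPolynomial (Fin 2) k), X 1, 1] F = f) :
    eval (![0, 1, 0] : Fin 3 → k) (pderiv 2 (pderiv 2 F)) ≠ 0
    ∧ eval (![1, 0, 0] : Fin 3 → k) (pderiv 1 (pderiv 1 F)) ≠ 0 := by
  have htwo : (2 : k) ≠ 0 := Ring.two_ne_zero (by rw [ringChar.eq k p]; omega)
  have hF : F = sexticForm (quarticForm α1 α2 α3 α4) (quarticForm β1 β2 β3 β4)
      (differenceCubicForm α1 α2 α3 α4 β1 β2 β3 β4) :=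
    hFhom.eq_of_aeval_dehomogenize_eq (isHomogeneous_sexticForm (isHomogeneous_quarticForm ..)
      (isHomogeneous_quarticForm ..) (isHomogeneous_cubicForm ..))
      (by rw [hFf, hf, hφ1, hφ2, aeval_dehomogenize_sexticForm])
  rw [hF, differenceCubicForm, eval_pderiv_two_two_sexticForm, eval_pderiv_one_one_sexticForm]
  refine ⟨htwo, ?_⟩
  rw [show (-8 : k) = -2 ^ 3 by norm_num]
  exact neg_ne_zero.mpr (pow_ne_zero 3 htwo)

/-- The singular points (0:1:0) and (1:0:0) of the projective sextic F = 0 have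
multiplicity exactly 2: F_zz does not vanish at (0:1:0) and F_yy does not
vanish at (1:0:0). -/
theorem stmt_7
    {k : Type*} [Field k] [IsAlgClosed k]
    (p : ℕ) [CharP k p] (hp : p = 0 ∨ 5 ≤ p)
    (α1 α2 α3 α4 β1 β2 β3 β4 : k)
    (hdist : ([α1, α2, α3, α4, β1, β2, β3, β4] : List k).Pairwise (· ≠ ·))
    (φ1 φ2 f : MvPolynomial (Fin 2) k)
    (hφ1 : φ1 = (X 0 - C α1) * (X 0 - C α2) * (X 0 - C α3) * (X 0 - C α4))
    (hφ2 : φ2 = (X 0 - C β1) * (X 0 - C β2) * (X 0 - C β3) * (X 0 - C β4))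
    (hf : f = X 1 ^ 4 - C 2 * (φ1 + φ2) * X 1 ^ 2 + (φ1 - φ2) ^ 2)
    (F : MvPolynomial (Fin 3) k)
    (hFhom : F.IsHomogeneous 6)
    (hFf : aeval ![(X 0 : MvPolynomial (Fin 2) k), X 1, 1] F = f)
    (Sing : Set (Projectivization k (Fin 3 → k)))
    (hSing : ∀ P : Projectivization k (Fin 3 → k),
      P ∈ Sing ↔ (eval P.rep F = 0 ∧
        eval P.rep (pderiv 0 F) = 0 ∧
        eval P.rep (pderiv 1 F) = 0 ∧
        eval P.rep (pderiv 2 F) = 0)) :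
    eval (![0, 1, 0] : Fin 3 → k) (pderiv 2 (pderiv 2 F)) ≠ 0
    ∧ eval (![1, 0, 0] : Fin 3 → k) (pderiv 1 (pderiv 1 F)) ≠ 0 :=
  stmt_7_general p hp α1 α2 α3 α4 β1 β2 β3 β4 φ1 φ2 f hφ1 hφ2 hf F hFhom hFf
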